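/- With the graph notation below, assume S admits an orthonormal eigenbasis with eigenvalues 1 = λ₁ > λ₂ ≥ ⋯ ≥ λ_N > −1, and let λ = max(|λ₂|, |λ_N|) satisfy 0 < λ < 1. Define δ = Σ_{i=1}^{N} π_i ((I − S²)†)_{ii} and, for an integer ℓ ≥ 1, define δ̄ = Σ_{i=1}^{N} π_i Σ_{j=0}^{ℓ−1} ( (P^{2j})_{ii} − π_i ). Then for every ε > 0 and every integer ℓ ≥ log(2/(ε(1−λ)))/(2 log(1/λ)), one has |δ − δ̄| ≤ ε/2. -/

import Mathlib

open Matrix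

/-- `P` is the Moore–Penrose pseudoinverse of `M`. -/
def IsMoorePenrose {n : Type*} [Fintype n] [DecidableEq n]
    (M P : Matrix n n ℝ) : Prop :=
  M * P * M = M ∧ P * M * P = P ∧ (M * P)ᵀ = M * P ∧ (P * M)ᵀ = P * M

/-!
Write `S = Uᵀ diag(λ) U`, where the rows of the orthogonal matrix `U` are the eigenvectors `ψ_k`.
Then `(I - S²)† = Uᵀ diag((1 - λ²)⁻¹) U`; `P^m` is conjugate to `S^m` by `D^{1/2}`, so both have the
same diagonal; and `√d` is a fixed vector of `S`, so simplicity of the eigenvalue `1` gives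
`π_i = ψ₁(i)²`. Hence `δ - δ̄ = Σ_i π_i Σ_{k ≥ 2} ψ_k(i)² λ_k^{2ℓ} / (1 - λ_k²)`, a convex
combination of numbers in `[0, λ^{2ℓ} / (1 - λ)]`, and the choice of `ℓ` makes this at most `ε / 2`.
-/

open Finset Set

variable {n : Type*} [Fintype n]

theorem sq_div_sum_sq_of_eq_smul {v w : n → ℝ} {c : ℝ} (hv : v = c • w) (hv0 : v ≠ 0)
    (hw : ∑ i, w i ^ 2 = 1) (i : n) : v i ^ 2 / ∑ j, v j ^ 2 = w i ^ 2 := by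
  have hc : c ≠ 0 := by
    rintro rfl
    exact hv0 (by simpa using hv)
  simp only [hv, Pi.smul_apply, smul_eq_mul, mul_pow, ← mul_sum, hw]
  field_simp

variable [DecidableEq n]

namespace IsMoorePenrose

variable {M P P₁ P₂ : Matrix n n ℝ}

theorem transpose (h : IsMoorePenrose M P) : IsMoorePenrose Mᵀ Pᵀ := by
  obtain ⟨h₁, h₂, h₃, h₄⟩ := h
  refine ⟨?_, ?_, ?_, ?_⟩
  · rw [← transpose_mul, ← transpose_mul, ← Matrix.mul_assoc, h₁]
  · rw [← transpose_mul, ← transpose_mul, ← Matrix.mul_assoc, h₂]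
  · rw [← transpose_mul, transpose_transpose, h₄]
  · rw [← transpose_mul, transpose_transpose, h₃]

theorem mul_left_eq (h₁ : IsMoorePenrose M P₁) (h₂ : IsMoorePenrose M P₂) : M * P₁ = M * P₂ :=
  calc M * P₁ = (M * P₂ * M * P₁)ᵀ := by rw [h₂.1, h₁.2.2.1]
    _ = M * P₁ * (M * P₂) := by rw [Matrix.mul_assoc, transpose_mul, h₁.2.2.1, h₂.2.2.1]
    _ = M * P₂ := by rw [← Matrix.mul_assoc, h₁.1]

theorem unique (h₁ : IsMoorePenrose M P₁) (h₂ : IsMoorePenrose M P₂) : P₁ = P₂ := by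
  have hr : P₁ * M = P₂ * M := by
    simpa [transpose_mul] using congrArg Matrix.transpose (h₁.transpose.mul_left_eq h₂.transpose)
  calc P₁ = P₁ * M * P₁ := h₁.2.1.symm
    _ = P₂ * M * P₂ := by rw [Matrix.mul_assoc, h₁.mul_left_eq h₂, ← Matrix.mul_assoc, hr]
    _ = P₂ := h₂.2.1

end IsMoorePenrose

def conjDiagonal (U : Matrix n n ℝ) (f : n → ℝ) : Matrix n n ℝ := Uᵀ * diagonal f * U

section conjDiagonal

variable {U : Matrix n n ℝ}

theorem transpose_conjDiagonal (f : n → ℝ) : (conjDiagonal U f)ᵀ = conjDiagonal U f := by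
  simp [conjDiagonal, transpose_mul, Matrix.mul_assoc]

theorem conjDiagonal_apply_self (f : n → ℝ) (i : n) :
    conjDiagonal U f i i = ∑ k, f k * U k i ^ 2 := by
  rw [conjDiagonal, mul_apply]
  simp only [mul_diagonal, transpose_apply]
  exact sum_congr rfl fun k _ => by ring

theorem conjDiagonal_sub (f g : n → ℝ) :
    conjDiagonal U f - conjDiagonal U g = conjDiagonal U (f - g) := by
  simp only [conjDiagonal, ← Matrix.mul_sub, ← Matrix.sub_mul, diagonal_sub]
  rfl

theorem conjDiagonal_one (hU : U * Uᵀ = 1) : conjDiagonal U 1 = 1 := by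
  rw [conjDiagonal, Pi.one_def, diagonal_one, Matrix.mul_one, mul_eq_one_comm.mp hU]

theorem conjDiagonal_mul (hU : U * Uᵀ = 1) (f g : n → ℝ) :
    conjDiagonal U f * conjDiagonal U g = conjDiagonal U (f * g) := by
  calc conjDiagonal U f * conjDiagonal U g = Uᵀ * (diagonal f * (U * Uᵀ) * diagonal g) * U := by
        simp only [conjDiagonal, Matrix.mul_assoc]
    _ = conjDiagonal U (f * g) := by rw [hU, Matrix.mul_one, diagonal_mul_diagonal']; rfl

theorem conjDiagonal_pow (hU : U * Uᵀ = 1) (f : n → ℝ) (m : ℕ) :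
    conjDiagonal U f ^ m = conjDiagonal U (f ^ m) := by
  induction m with
  | zero => rw [pow_zero, pow_zero, conjDiagonal_one hU]
  | succ m ih => rw [pow_succ, ih, conjDiagonal_mul hU, pow_succ]

theorem sum_sq_apply_eq_one (hU : U * Uᵀ = 1) (i : n) : ∑ k, U k i ^ 2 = 1 := by
  have h := conjDiagonal_apply_self (U := U) 1 i
  rw [conjDiagonal_one hU, one_apply_eq] at h
  simpa using h.symm

theorem sum_sq_apply_row_eq_one (hU : U * Uᵀ = 1) (k : n) : ∑ i, U k i ^ 2 = 1 :=
  sum_sq_apply_eq_one (U := Uᵀ) (by rw [transpose_transpose, mul_eq_one_comm.mp hU]) k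

/-- Pointwise inversion with `0⁻¹ = 0` is exactly the pseudoinverse of a diagonal matrix. -/
theorem isMoorePenrose_conjDiagonal (hU : U * Uᵀ = 1) (f : n → ℝ) :
    IsMoorePenrose (conjDiagonal U f) (conjDiagonal U f⁻¹) := by
  simp only [IsMoorePenrose, conjDiagonal_mul hU, transpose_conjDiagonal]
  exact ⟨congrArg _ (funext fun k => mul_inv_mul_cancel (f k)),
    congrArg _ (funext fun k => by simpa using mul_inv_mul_cancel (f k)⁻¹), trivial, trivial⟩

end conjDiagonal

section Eigenbasis

variable {ψ : n → n → ℝ}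

theorem of_mul_transpose_of_orthonormal (horth : ∀ k l, ψ k ⬝ᵥ ψ l = if k = l then 1 else 0) :
    of ψ * (of ψ)ᵀ = 1 := by
  ext k l
  simpa [mul_apply, dotProduct, one_apply] using horth k l

theorem eq_conjDiagonal_of_orthonormal_eigenbasis {S : Matrix n n ℝ} {lam : n → ℝ}
    (heig : ∀ k, S *ᵥ ψ k = lam k • ψ k)
    (horth : ∀ k l, ψ k ⬝ᵥ ψ l = if k = l then 1 else 0) :
    S = conjDiagonal (of ψ) lam := by
  have hSU : S * (of ψ)ᵀ = (of ψ)ᵀ * diagonal lam := by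
    ext i k
    rw [mul_diagonal]
    simpa [mul_apply, mulVec, dotProduct, mul_comm] using congrFun (heig k) i
  calc S = S * (of ψ)ᵀ * of ψ := by
        rw [Matrix.mul_assoc, mul_eq_one_comm.mp (of_mul_transpose_of_orthonormal horth),
          Matrix.mul_one]
    _ = conjDiagonal (of ψ) lam := by rw [hSU, conjDiagonal]

end Eigenbasis

theorem eq_smul_of_conjDiagonal_mulVec_eq_self {U : Matrix n n ℝ} (hU : U * Uᵀ = 1) {lam : n → ℝ}
    {k₀ : n} (hsimple : ∀ k ≠ k₀, lam k ≠ 1) {v : n → ℝ} (hv : conjDiagonal U lam *ᵥ v = v) :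
    v = (U *ᵥ v) k₀ • U k₀ := by
  have hfixed : diagonal lam *ᵥ (U *ᵥ v) = U *ᵥ v := by
    rw [mulVec_mulVec, ← Matrix.one_mul (diagonal lam), ← hU]
    simp only [conjDiagonal, Matrix.mul_assoc] at hv ⊢
    rw [← mulVec_mulVec, hv]
  have hzero : ∀ k ≠ k₀, (U *ᵥ v) k = 0 := fun k hk => by
    have h := congrFun hfixed k
    rw [mulVec_diagonal] at h
    by_contra hc
    exact hsimple k hk ((mul_eq_right₀ hc).mp h)
  calc v = Uᵀ *ᵥ (U *ᵥ v) := by rw [mulVec_mulVec, mul_eq_one_comm.mp hU, one_mulVec]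
    _ = (U *ᵥ v) k₀ • U k₀ := by
      ext i
      rw [mulVec, dotProduct, sum_eq_single k₀ (fun k _ hk => by rw [hzero k hk, mul_zero])
        (by simp)]
      simp [mul_comm]

theorem apply_self_eq_of_diagonal_mul_eq {R : Type*} [CommRing R] [IsDomain R] {f : n → R}
    {M M' : Matrix n n R} (h : diagonal f * M = M' * diagonal f) {i : n} (hf : f i ≠ 0) :
    M i i = M' i i := by
  have h := congrFun₂ h i i
  rw [diagonal_mul, mul_diagonal, mul_comm] at h
  exact mul_right_cancel₀ hf h

section Graph

variable (A : Matrix n n ℝ) {d : n → ℝ}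

theorem normalizedAdjacency_mulVec_sqrt (hdpos : ∀ i, 0 < d i) (hd : ∀ i, d i = ∑ j, A i j) :
    (diagonal (fun i => (√(d i))⁻¹) * A * diagonal (fun i => (√(d i))⁻¹)) *ᵥ (fun i => √(d i))
      = fun i => √(d i) := by
  ext i
  have hs : ∀ j, √(d j) ≠ 0 := fun j => (Real.sqrt_pos.mpr (hdpos j)).ne'
  simp only [mulVec, dotProduct, mul_diagonal, diagonal_mul, mul_assoc,
    inv_mul_cancel₀ (hs _), mul_one, ← mul_sum, ← hd]
  rw [inv_mul_eq_iff_eq_mul₀ (hs i), Real.mul_self_sqrt (hdpos i).le]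

theorem diagonal_sqrt_mul_transition (hdpos : ∀ i, 0 < d i) :
    diagonal (fun i => √(d i)) * (diagonal (fun i => (d i)⁻¹) * A)
      = diagonal (fun i => (√(d i))⁻¹) * A * diagonal (fun i => (√(d i))⁻¹)
        * diagonal (fun i => √(d i)) := by
  ext i j
  have hs : ∀ j, √(d j) ≠ 0 := fun j => (Real.sqrt_pos.mpr (hdpos j)).ne'
  simp only [mul_diagonal, diagonal_mul, mul_assoc, inv_mul_cancel₀ (hs _), mul_one]
  have hinv : (d i)⁻¹ = (√(d i))⁻¹ * (√(d i))⁻¹ := by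
    rw [← mul_inv, Real.mul_self_sqrt (hdpos i).le]
  rw [hinv, ← mul_assoc, ← mul_assoc, mul_inv_cancel₀ (hs i), one_mul]

end Graph

theorem inv_one_sub_sub_geom_sum_mem_Icc {x μ : ℝ} (hx : 0 ≤ x) (hμ : 0 ≤ μ) (hxμ : x ≤ μ ^ 2)
    (hμ1 : μ < 1) (ℓ : ℕ) :
    (1 - x)⁻¹ - ∑ j ∈ range ℓ, x ^ j ∈ Icc 0 (μ ^ (2 * ℓ) / (1 - μ)) := by
  have hx1 : 0 < 1 - x := by nlinarith
  have htail : (1 - x)⁻¹ - ∑ j ∈ range ℓ, x ^ j = x ^ ℓ / (1 - x) := by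
    rw [eq_div_iff hx1.ne', sub_mul, inv_mul_cancel₀ hx1.ne', geom_sum_mul_neg]
    ring
  rw [htail]
  refine ⟨by positivity, div_le_div₀ (by positivity) ?_ (by linarith) (by nlinarith)⟩
  rw [pow_mul]
  exact pow_le_pow_left₀ hx hxμ ℓ

theorem pow_two_mul_div_one_sub_le_of_log_le {μ ε : ℝ} {ℓ : ℕ} (hμ0 : 0 < μ) (hμ1 : μ < 1)
    (hε : 0 < ε) (hℓ : Real.log (2 / (ε * (1 - μ))) / (2 * Real.log (1 / μ)) ≤ ℓ) :
    μ ^ (2 * ℓ) / (1 - μ) ≤ ε / 2 := by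
  have h1μ : 0 < 1 - μ := by linarith
  have hlog : 0 < Real.log (1 / μ) := Real.log_pos (one_lt_one_div hμ0 hμ1)
  have hpow : μ ^ (2 * ℓ) ≤ ε * (1 - μ) / 2 := by
    rw [Real.pow_le_iff_le_log hμ0 (by positivity)]
    rw [div_le_iff₀ (by positivity)] at hℓ
    have h₁ : Real.log (ε * (1 - μ) / 2) = -Real.log (2 / (ε * (1 - μ))) := by
      rw [← Real.log_inv, inv_div]
    have h₂ : Real.log (1 / μ) = -Real.log μ := by rw [one_div, Real.log_inv]
    rw [h₁]
    rw [h₂] at hℓ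
    push_cast
    linarith
  calc μ ^ (2 * ℓ) / (1 - μ) ≤ ε * (1 - μ) / 2 / (1 - μ) := div_le_div_of_nonneg_right hpow h1μ.le
    _ = ε / 2 := by field_simp

theorem truncatedDisagreement_error_mem_Icc {U : Matrix n n ℝ} (hU : U * Uᵀ = 1) {lam : n → ℝ}
    {k₀ : n} (hlam₀ : lam k₀ = 1) {μ : ℝ} (hμ0 : 0 ≤ μ) (hμ1 : μ < 1)
    (hbound : ∀ k ≠ k₀, |lam k| ≤ μ) {p : n → ℝ} (hp : ∀ i, p i = U k₀ i ^ 2) (ℓ : ℕ) :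
    ∑ i, p i * conjDiagonal U (1 - lam ^ 2)⁻¹ i i
        - ∑ i, p i * ∑ j ∈ range ℓ, ((conjDiagonal U lam ^ (2 * j)) i i - p i)
      ∈ Icc 0 (μ ^ (2 * ℓ) / (1 - μ)) := by
  set r : n → ℝ := fun k =>
    (1 - lam k ^ 2)⁻¹ - ∑ j ∈ range ℓ, ((lam k ^ 2) ^ j - if k = k₀ then 1 else 0)
  have hr : ∀ k, r k ∈ Icc 0 (μ ^ (2 * ℓ) / (1 - μ)) := fun k => by
    by_cases hk : k = k₀
    · simpa [r, hk, hlam₀] using div_nonneg (pow_nonneg hμ0 _) (sub_nonneg.mpr hμ1.le)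
    · simpa [r, hk] using inv_one_sub_sub_geom_sum_mem_Icc (sq_nonneg (lam k)) hμ0
        (sq_le_sq' (abs_le.mp (hbound k hk)).1 (abs_le.mp (hbound k hk)).2) hμ1 ℓ
  have hdiag : ∀ i, conjDiagonal U (1 - lam ^ 2)⁻¹ i i
      - ∑ j ∈ range ℓ, ((conjDiagonal U lam ^ (2 * j)) i i - p i) = ∑ k, U k i ^ 2 * r k := by
    intro i
    have hpi : p i = ∑ k, (if k = k₀ then 1 else 0) * U k i ^ 2 := by simp [hp]
    simp only [conjDiagonal_pow hU, conjDiagonal_apply_self, hpi, ← sum_sub_distrib, ← sub_mul,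
      Pi.pow_apply, Pi.inv_apply, Pi.sub_apply, Pi.one_apply, pow_mul, r]
    rw [sum_comm, ← sum_sub_distrib]
    refine sum_congr rfl fun k _ => ?_
    rw [← sum_mul]
    ring
  have hinner : ∀ i, ∑ k, U k i ^ 2 * r k ∈ Icc 0 (μ ^ (2 * ℓ) / (1 - μ)) := fun i =>
    (convex_Icc _ _).sum_mem (fun k _ => sq_nonneg _) (sum_sq_apply_eq_one hU i) fun k _ => hr k
  rw [← sum_sub_distrib]
  simp only [← mul_sub, hdiag]
  exact (convex_Icc _ _).sum_mem (fun i _ => hp i ▸ sq_nonneg _)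
    (by simpa [hp] using sum_sq_apply_row_eq_one hU k₀) fun i _ => hinner i

theorem degree_div_sum_eq_sq_of_eq_conjDiagonal (A : Matrix n n ℝ) {d : n → ℝ}
    (hdpos : ∀ i, 0 < d i) (hd : ∀ i, d i = ∑ j, A i j) {U : Matrix n n ℝ} (hU : U * Uᵀ = 1)
    {lam : n → ℝ} {k₀ : n} (hsimple : ∀ k ≠ k₀, lam k ≠ 1)
    (hS : diagonal (fun i => (√(d i))⁻¹) * A * diagonal (fun i => (√(d i))⁻¹) = conjDiagonal U lam)
    (i : n) : d i / ∑ j, d j = U k₀ i ^ 2 := by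
  have hv := eq_smul_of_conjDiagonal_mulVec_eq_self hU hsimple
    (hS ▸ normalizedAdjacency_mulVec_sqrt A hdpos hd)
  have hv0 : (fun i => √(d i)) ≠ 0 := fun h =>
    (Real.sqrt_pos.mpr (hdpos i)).ne' (congrFun h i)
  simpa [Real.sq_sqrt (hdpos _).le] using
    sq_div_sum_sq_of_eq_smul hv hv0 (sum_sq_apply_row_eq_one hU k₀) i

/-- with the same graph setup as Statement 2, the truncated
disagreement `δ̄ = Σ_i π_i Σ_{j=0}^{ℓ−1} ((P^{2j})_{ii} − π_i)` approximates the
true disagreement `δ = Σ_i π_i ((I−S²)†)_{ii}` within `ε/2` whenever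
`ℓ ≥ log(2/(ε(1−λ)))/(2 log(1/λ))`. -/
theorem stmt3 (N : ℕ) (hN : 2 ≤ N)
    (A : Matrix (Fin N) (Fin N) ℝ)
    (d : Fin N → ℝ) (hd : ∀ i, d i = ∑ j, A i j) (hdpos : ∀ i, 0 < d i)
    (dsum : ℝ) (hdsum : dsum = ∑ i, d i)
    (P : Matrix (Fin N) (Fin N) ℝ)
    (hP : P = Matrix.diagonal (fun i => (d i)⁻¹) * A)
    (S : Matrix (Fin N) (Fin N) ℝ)
    (hSdef : S = Matrix.diagonal (fun i => (Real.sqrt (d i))⁻¹) * A *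
        Matrix.diagonal (fun i => (Real.sqrt (d i))⁻¹))
    (pv : Fin N → ℝ) (hpv : ∀ i, pv i = d i / dsum)
    (ψ : Fin N → (Fin N → ℝ)) (lam : Fin N → ℝ)
    (heig : ∀ k, S.mulVec (ψ k) = lam k • ψ k)
    (horth : ∀ k l, ψ k ⬝ᵥ ψ l = if k = l then 1 else 0)
    (hlam0 : lam ⟨0, by omega⟩ = 1)
    (hanti : ∀ k l : Fin N, k ≤ l → lam l ≤ lam k)
    (hgap : ∀ k : Fin N, k ≠ ⟨0, by omega⟩ → lam k < 1)
    (lamStar : ℝ)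
    (hlamStar : lamStar = max |lam ⟨1, by omega⟩| |lam ⟨N - 1, by omega⟩|)
    (hlamStar0 : 0 < lamStar) (hlamStar1 : lamStar < 1)
    (Q : Matrix (Fin N) (Fin N) ℝ)
    (hQ : IsMoorePenrose (1 - S ^ 2) Q)
    (δ : ℝ) (hδ : δ = ∑ i, pv i * Q i i)
    (ε : ℝ) (hε : 0 < ε) (ℓ : ℕ)
    (hℓ : Real.log (2 / (ε * (1 - lamStar))) / (2 * Real.log (1 / lamStar)) ≤ ℓ)
    (δbar : ℝ)
    (hδbar : δbar = ∑ i, pv i * ∑ j ∈ Finset.range ℓ, ((P ^ (2 * j)) i i - pv i)) :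
    |δ - δbar| ≤ ε / 2 := by
  set k₀ : Fin N := ⟨0, by omega⟩
  set U : Matrix (Fin N) (Fin N) ℝ := of ψ
  have hU : U * Uᵀ = 1 := of_mul_transpose_of_orthonormal horth
  have hS : S = conjDiagonal U lam := eq_conjDiagonal_of_orthonormal_eigenbasis heig horth
  have hQU : Q = conjDiagonal U (1 - lam ^ 2)⁻¹ := by
    refine hQ.unique ?_
    rw [hS, conjDiagonal_pow hU, ← conjDiagonal_one hU, conjDiagonal_sub]
    exact isMoorePenrose_conjDiagonal hU _
  have hpvU : ∀ i, pv i = U k₀ i ^ 2 := fun i => by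
    rw [hpv, hdsum]
    exact degree_div_sum_eq_sq_of_eq_conjDiagonal A hdpos hd hU (fun k hk => (hgap k hk).ne)
      (hSdef ▸ hS) i
  have hPS : ∀ m i, (P ^ m) i i = (S ^ m) i i := fun m i => by
    have hsemi : SemiconjBy (diagonal fun i => √(d i)) P S := by
      rw [hP, hSdef]
      exact diagonal_sqrt_mul_transition A hdpos
    exact apply_self_eq_of_diagonal_mul_eq (hsemi.pow_right m) (Real.sqrt_pos.mpr (hdpos i)).ne'
  have hbound : ∀ k ≠ k₀, |lam k| ≤ lamStar := fun k hk => by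
    have hk : k.val ≠ 0 := fun h => hk (Fin.ext h)
    rw [hlamStar, max_comm]
    exact abs_le_max_abs_abs (hanti _ _ (Fin.le_def.mpr (show k.val ≤ N - 1 by omega)))
      (hanti _ _ (Fin.le_def.mpr (show 1 ≤ k.val by omega)))
  have hmem := truncatedDisagreement_error_mem_Icc hU hlam0 hlamStar0.le hlamStar1 hbound hpvU ℓ
  rw [← hS, ← hQU] at hmem
  simp only [← hPS, ← hδ, ← hδbar] at hmem
  rw [abs_of_nonneg hmem.1]
  exact hmem.2.trans (pow_two_mul_div_one_sub_le_of_log_le hlamStar0 hlamStar1 hε hℓ)
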